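/- Let L and K be closed subspaces of a complex Hilbert space H with L ∔ K = H. Then P_L − P_K is invertible in B(H), and the operator E := P_L (P_L − P_K)^{-1} is a continuous idempotent (E∘E = E) with range(E) = L and kernel(E) = K. -/

import Mathlib

/-! Let `Q` be the bounded idempotent with range `L` and kernel `K` (bounded because both are
closed). Since `P_L` and `Q` are idempotents with the same range, `P_L Q = Q` and `Q P_L = P_L`;
likewise `P_K` and `1 - Q` share the range `K`. These four relations and the self-adjointness of
`P_L`, `P_K` make `Q + Q* - 1` a two-sided inverse of `P_L - P_K`, and `P_L (Q + Q* - 1) = Q`. -/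

/-- The orthogonal projection onto a closed subspace `S`, as an operator on `H`. -/
noncomputable def orthProj {H : Type*} [NormedAddCommGroup H] [InnerProductSpace ℂ H]
    [CompleteSpace H] (S : Submodule ℂ H) (hS : IsClosed (S : Set H)) : H →L[ℂ] H :=
  haveI : CompleteSpace S := hS.completeSpace_coe
  S.subtypeL ∘L S.orthogonalProjectionOnto

theorem orthProj_eq_starProjection {H : Type*} [NormedAddCommGroup H] [InnerProductSpace ℂ H]
    [CompleteSpace H] (S : Submodule ℂ H) (hS : IsClosed (S : Set H))
    [S.HasOrthogonalProjection] : orthProj S hS = S.starProjection :=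
  rfl

section

variable {R : Type*} [Ring R] [StarRing R] {p r q : R}

theorem sub_mul_add_star_sub_one_eq_one (hp : IsSelfAdjoint p) (hr : IsSelfAdjoint r)
    (hpq : p * q = q) (hqp : q * p = p) (hrq : r * (1 - q) = 1 - q) (hqr : (1 - q) * r = r) :
    (p - r) * (q + star q - 1) = 1 := by
  have hp_star_q : p * star q = p := by simpa [hp.star_eq] using congr_arg star hqp
  have hr_star_q : r * star q = 0 := by
    simpa [hr.star_eq, sub_mul, sub_eq_self] using congr_arg star hqr
  have hr_q : r * q = r - 1 + q := by
    have := congr_arg (r - ·) hrq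
    simp only [mul_sub, mul_one, sub_sub_cancel] at this
    rw [this]
    abel
  simp only [mul_sub, mul_add, sub_mul, mul_one, hpq, hp_star_q, hr_star_q, hr_q]
  abel

theorem add_star_sub_one_mul_sub_eq_one (hp : IsSelfAdjoint p) (hr : IsSelfAdjoint r)
    (hpq : p * q = q) (hqp : q * p = p) (hrq : r * (1 - q) = 1 - q) (hqr : (1 - q) * r = r) :
    (q + star q - 1) * (p - r) = 1 := by
  simpa [hp.star_eq, hr.star_eq, add_comm (star q)] using
    congr_arg star (sub_mul_add_star_sub_one_eq_one hp hr hpq hqp hrq hqr)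

theorem isUnit_sub_and_mul_inverse_sub_eq (hp : IsSelfAdjoint p) (hr : IsSelfAdjoint r)
    (hpq : p * q = q) (hqp : q * p = p) (hrq : r * (1 - q) = 1 - q) (hqr : (1 - q) * r = r) :
    IsUnit (p - r) ∧ p * Ring.inverse (p - r) = q := by
  let u : Rˣ := ⟨p - r, q + star q - 1, sub_mul_add_star_sub_one_eq_one hp hr hpq hqp hrq hqr,
    add_star_sub_one_mul_sub_eq_one hp hr hpq hqp hrq hqr⟩
  have hp_star_q : p * star q = p := by simpa [hp.star_eq] using congr_arg star hqp
  refine ⟨u.isUnit, ?_⟩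
  rw [show p - r = u from rfl, Ring.inverse_unit]
  change p * (q + star q - 1) = q
  rw [mul_sub, mul_add, hpq, hp_star_q, mul_one, add_sub_cancel_right]

end

namespace Submodule

variable {𝕜 E : Type*} [RCLike 𝕜] [NormedAddCommGroup E] [InnerProductSpace 𝕜 E]
  {U V : Submodule 𝕜 E} [U.HasOrthogonalProjection]

theorem starProjection_mul_projectionL (h : IsTopCompl U V) :
    U.starProjection * U.projectionL V h = U.projectionL V h :=
  ContinuousLinearMap.ext fun x ↦ starProjection_eq_self_iff.mpr (projectionL_apply_mem h x)

theorem projectionL_mul_starProjection (h : IsTopCompl U V) :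
    U.projectionL V h * U.starProjection = U.starProjection :=
  ContinuousLinearMap.ext fun x ↦ (projectionL_eq_self_iff h _).mpr (U.starProjection_apply_mem x)

end Submodule

open Submodule in
/-- If `L ∔ K = H` for closed subspaces `L`, `K` of a complex Hilbert space, then
`P_L - P_K` is invertible and `E = P_L (P_L - P_K)⁻¹` is a continuous idempotent
with range `L` and kernel `K`. -/
theorem idempotent_of_complementary {H : Type*} [NormedAddCommGroup H]
    [InnerProductSpace ℂ H] [CompleteSpace H]
    (L K : Submodule ℂ H) (hL : IsClosed (L : Set H)) (hK : IsClosed (K : Set H))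
    (h : IsCompl L K) :
    IsUnit (orthProj L hL - orthProj K hK) ∧
    ∀ E : H →L[ℂ] H,
      E = orthProj L hL * Ring.inverse (orthProj L hL - orthProj K hK) →
        E ∘L E = E ∧ LinearMap.range (E : H →ₗ[ℂ] H) = L ∧ LinearMap.ker (E : H →ₗ[ℂ] H) = K := by
  have := hL.completeSpace_coe
  have := hK.completeSpace_coe
  have hLK : IsTopCompl L K := h.isTopCompl_of_isClosed hL hK
  have hKL : 1 - L.projectionL K hLK = K.projectionL L hLK.symm :=
    (projectionL_eq_id_sub_projectionL hLK).symm
  obtain ⟨hunit, hinv⟩ := isUnit_sub_and_mul_inverse_sub_eq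
    (isSelfAdjoint_starProjection L) (isSelfAdjoint_starProjection K)
    (starProjection_mul_projectionL hLK) (projectionL_mul_starProjection hLK)
    (hKL ▸ starProjection_mul_projectionL hLK.symm) (hKL ▸ projectionL_mul_starProjection hLK.symm)
  refine ⟨hunit, fun E hE ↦ ?_⟩
  rw [hE, orthProj_eq_starProjection, orthProj_eq_starProjection, hinv]
  exact ⟨(isIdempotentElem_projectionL hLK).eq, range_projectionL hLK, ker_projectionL hLK⟩
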